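/- arXiv:0911.5475 — 6 statements merged into one kernel-verified Lean document; each statement's English description precedes it below -/
import Mathlib

section
/- Let G be a nonempty labelled graph with c strongly connected components, let t be a positive integer, and let k ≥ (t+1)c² + c. If e₁,…,e_k and f₁,…,f_k are two walks in G of length k, then there exist components M_e, M_f of G and a positive integer r ≤ k − t + 1 such that e_{r+i} lies in M_e and f_{r+i} lies in M_f for every i ∈ {0,1,…,t−1}. -/
/-! Common definitions: labelled graphs, walks, follower sets, the linking
relation, subshifts over `ℤ → A`, chains, and attractors. -/

structure LGraph (A : Type) where
  V : Type
  E : Type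
  [finV : Finite V]
  [finE : Finite E]
  s : E → V
  t : E → V
  lab : E → A

attribute [instance] LGraph.finV LGraph.finE

namespace LGraph

variable {A : Type}

/-- `Walk G u v es` : the list of edges `es` forms a walk from `u` to `v`. -/
inductive Walk (G : LGraph A) : G.V → G.V → List G.E → Prop
  | nil (v : G.V) : Walk G v v []
  | cons {w : G.V} {es : List G.E} (e : G.E) (h : Walk G (G.t e) w es) :
      Walk G (G.s e) w (e :: es)

/-- There is an edge from `u` to `v`. -/
def EdgeRel (G : LGraph A) (u v : G.V) : Prop := ∃ e : G.E, G.s e = u ∧ G.t e = v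

/-- `v` is reachable from `u` by a directed walk. -/
def Reach (G : LGraph A) : G.V → G.V → Prop := Relation.ReflTransGen G.EdgeRel

/-- `u` and `v` lie in the same strongly connected component. -/
def SameComp (G : LGraph A) (u v : G.V) : Prop := G.Reach u v ∧ G.Reach v u

/-- The number of strongly connected components of `G`. -/
noncomputable def numComponents (G : LGraph A) : ℕ :=
  Nat.card {K : Set G.V // ∃ v : G.V, K = {u : G.V | G.SameComp v u}}

/-- The restricted follower set of `v` : words labelling walks starting at `v`
that stay inside the strongly connected component of `v`. -/
def FollowR (G : LGraph A) (v : G.V) : Set (List A) :=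
  {w | ∃ (u : G.V) (es : List G.E), G.Walk v u es ∧ es.map G.lab = w ∧
        ∀ e ∈ es, G.SameComp v (G.s e) ∧ G.SameComp v (G.t e)}

/-- Two vertices are linked iff their restricted follower sets have infinite
intersection. -/
def Linked (G : LGraph A) (u v : G.V) : Prop := (G.FollowR u ∩ G.FollowR v).Infinite

/-- `≈` : the reflexive-transitive closure of the linked relation. -/
def Approx (G : LGraph A) : G.V → G.V → Prop := Relation.ReflTransGen G.Linked

/-- One step in the linking graph `G/≈` (lifted to `G`): either an edge of `G`
or a jump between linked vertices. -/
def GenStep (G : LGraph A) (u v : G.V) : Prop := G.EdgeRel u v ∨ G.Linked u v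

/-- Reachability in the linking graph `G/≈`, expressed on vertices of `G`. -/
def GenReach (G : LGraph A) : G.V → G.V → Prop := Relation.ReflTransGen G.GenStep

/-- The language of `G` : words labelling finite walks in `G`. -/
def Lang (G : LGraph A) : Set (List A) :=
  {w | ∃ (u v : G.V) (es : List G.E), G.Walk u v es ∧ es.map G.lab = w}

/-- `w` has a presentation in the subgraph of `G` induced by the vertex set `S`. -/
def PresIn (G : LGraph A) (S : Set G.V) (w : List A) : Prop :=
  ∃ (u v : G.V) (es : List G.E), G.Walk u v es ∧ es.map G.lab = w ∧
    u ∈ S ∧ v ∈ S ∧ ∀ e ∈ es, G.s e ∈ S ∧ G.t e ∈ S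

/-- A presentation of the first `n` letters of `w`, with explicit vertex
sequence `v` and edge sequence `e`. -/
def PresFun (G : LGraph A) (n : ℕ) (w : ℕ → A) (v : ℕ → G.V) (e : ℕ → G.E) : Prop :=
  ∀ i < n, G.s (e i) = v i ∧ G.t (e i) = v (i + 1) ∧ G.lab (e i) = w i

/-- `S` is a union of `≈`-equivalence classes, i.e. `S = π⁻¹(π(S))` for the
projection `π : G → G/≈`. -/
def SaturatedSet (G : LGraph A) (S : Set G.V) : Prop :=
  ∀ u v : G.V, G.Approx u v → (u ∈ S ↔ v ∈ S)

/-- No edge leaves `S` : together with saturation this says that the image of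
`S` in `G/≈` is a terminal subgraph. -/
def ForwardClosed (G : LGraph A) (S : Set G.V) : Prop :=
  ∀ e : G.E, G.s e ∈ S → G.t e ∈ S

/-- Every vertex has an ingoing and an outgoing edge. -/
def Essential (G : LGraph A) : Prop :=
  ∀ v : G.V, (∃ e : G.E, G.t e = v) ∧ (∃ e : G.E, G.s e = v)

/-- A biinfinite presentation of `x` (vertex sequence `v`, edge sequence `e`)
staying in the vertex set `S`. -/
def BiPresIn (G : LGraph A) (S : Set G.V) (x : ℤ → A) (v : ℤ → G.V) (e : ℤ → G.E) : Prop :=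
  ∀ i : ℤ, G.s (e i) = v i ∧ G.t (e i) = v (i + 1) ∧ G.lab (e i) = x i ∧ v i ∈ S

/-- The subshift of biinfinite label sequences of biinfinite walks of `G`
staying in `S`. -/
def SigmaIn (G : LGraph A) (S : Set G.V) : Set (ℤ → A) :=
  {x | ∃ v e, G.BiPresIn S x v e}

/-- The sofic subshift `Σ(G)`. -/
def Sigma' (G : LGraph A) : Set (ℤ → A) := G.SigmaIn Set.univ

/-- The linking graph `G/≈` is strongly connected. -/
def StronglyConnectedQuot (G : LGraph A) : Prop := ∀ u v : G.V, G.GenReach u v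

/-- The linking graph `G/≈` is periodic : its vertices can be partitioned into
`n > 1` classes (indexed by `ZMod n`, each a union of `≈`-classes) so that every
edge advances the class index by one. -/
def PeriodicQuot (G : LGraph A) : Prop :=
  ∃ n : ℕ, 1 < n ∧ ∃ c : G.V → ZMod n,
    (∀ u v : G.V, G.Approx u v → c u = c v) ∧ ∀ e : G.E, c (G.t e) = c (G.s e) + 1

/-- The label product `G * H`. -/
def labelProduct (G H : LGraph A) : LGraph A where
  V := G.V × H.V
  E := {p : G.E × H.E // G.lab p.1 = H.lab p.2}
  s := fun p => (G.s p.1.1, H.s p.1.2)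
  t := fun p => (G.t p.1.1, H.t p.1.2)
  lab := fun p => G.lab p.1.1

end LGraph

section Subshift

variable {A : Type}

/-- The shift map `σ`. -/
def shift (x : ℤ → A) : ℤ → A := fun i => x (i + 1)

open Classical in
/-- The metric `ρ(x,y) = 2^{-n}` where `n` is minimal with `x_n ≠ y_n` or
`x_{-n} ≠ y_{-n}` (and `ρ(x,x) = 0`). -/
noncomputable def rho (x y : ℤ → A) : ℝ :=
  if x = y then 0
  else (2 : ℝ) ^ (-((sInf {n : ℕ | ∃ i : ℤ, i.natAbs = n ∧ x i ≠ y i} : ℕ) : ℤ))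

/-- Closedness with respect to the metric `rho`. -/
def RhoClosed (Sig : Set (ℤ → A)) : Prop :=
  ∀ x : ℤ → A, (∀ ε : ℝ, 0 < ε → ∃ y ∈ Sig, rho x y < ε) → x ∈ Sig

/-- A subshift : a closed, strongly shift-invariant subset of `A^ℤ`. -/
def IsSubshift (Sig : Set (ℤ → A)) : Prop :=
  RhoClosed Sig ∧ shift '' Sig = Sig

/-- The language of the subshift `Sig` : all finite factors of its points. -/
def lang (Sig : Set (ℤ → A)) : Set (List A) :=
  {w | ∃ x ∈ Sig, ∃ k : ℤ, ∀ (i : ℕ) (h : i < w.length), w.get ⟨i, h⟩ = x (k + i)}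

/-- The central factor `x_{[-l,l]}` of a biinfinite word. -/
def central (x : ℤ → A) (l : ℕ) : List A :=
  (List.range (2 * l + 1)).map fun i => x ((i : ℤ) - (l : ℤ))

/-- `ChainWord L u v n w` : `w` is a chain of length `n` from `u` to `v` in the
language `L` : `|w| = n + |u|`, `w` has prefix `u` and suffix `v`, and every
factor of `w` of length at most `|u|` belongs to `L`. -/
def ChainWord (L : Set (List A)) (u v : List A) (n : ℕ) (w : List A) : Prop :=
  u.length = v.length ∧ w.length = n + u.length ∧
  w.take u.length = u ∧ w.drop n = v ∧
  ∀ z : List A, z <:+: w → z.length ≤ u.length → z ∈ L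

/-- An `ε`-chain of length `n > 0` from `x` to `y` inside `Sig`. -/
def EpsChain (Sig : Set (ℤ → A)) (ε : ℝ) (n : ℕ) (x y : ℤ → A) : Prop :=
  0 < n ∧ ∃ z : ℕ → ℤ → A, z 0 = x ∧ z n = y ∧ (∀ i ≤ n, z i ∈ Sig) ∧
    ∀ i < n, rho (shift (z i)) (z (i + 1)) < ε

/-- The chain relation of `(Sig, σ)`. -/
def ChainRel (Sig : Set (ℤ → A)) (x y : ℤ → A) : Prop :=
  ∀ ε : ℝ, 0 < ε → ∃ n : ℕ, EpsChain Sig ε n x y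

/-- Chain-transitivity. -/
def ChainTransitive (Sig : Set (ℤ → A)) : Prop :=
  ∀ x ∈ Sig, ∀ y ∈ Sig, ChainRel Sig x y

/-- Chain-mixing. -/
def ChainMixing (Sig : Set (ℤ → A)) : Prop :=
  ∀ x ∈ Sig, ∀ y ∈ Sig, ∀ ε : ℝ, 0 < ε → ∃ k : ℕ, ∀ n, k < n → EpsChain Sig ε n x y

/-- Distance from a point to a set, with respect to `rho`. -/
noncomputable def distTo (x : ℤ → A) (Y : Set (ℤ → A)) : ℝ := sInf (rho x '' Y)

/-- `Y` is an attractor of the dynamical system `(Sig, σ)`. -/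
def IsAttractor (Sig Y : Set (ℤ → A)) : Prop :=
  Y.Nonempty ∧ Y ⊆ Sig ∧ RhoClosed Y ∧ shift '' Y = Y ∧
  (∀ ε : ℝ, 0 < ε → ∃ δ : ℝ, 0 < δ ∧ ∀ x ∈ Sig, distTo x Y < δ →
    ∀ n : ℕ, 0 < n → distTo (shift^[n] x) Y < ε) ∧
  (∃ δ : ℝ, 0 < δ ∧ ∀ x ∈ Sig, distTo x Y < δ →
    Filter.Tendsto (fun n : ℕ => distTo (shift^[n] x) Y) Filter.atTop (nhds 0))

end Subshift

namespace StmtAux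

variable {A : Type}

lemma sameComp_refl (G : LGraph A) (v : G.V) : G.SameComp v v :=
  ⟨Relation.ReflTransGen.refl, Relation.ReflTransGen.refl⟩

lemma sameComp_trans (G : LGraph A) {u v w : G.V} (h1 : G.SameComp u v)
    (h2 : G.SameComp v w) : G.SameComp u w :=
  ⟨h1.1.trans h2.1, h2.2.trans h1.2⟩

lemma reach_chain (G : LGraph A) (v : ℕ → G.V) {a b : ℕ} (hab : a ≤ b)
    (h : ∀ i, a ≤ i → i < b → G.Reach (v i) (v (i + 1))) : G.Reach (v a) (v b) := by
  induction b, hab using Nat.le_induction with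
  | base => exact Relation.ReflTransGen.refl
  | succ n hn ih =>
      exact (ih (fun i hi hi' => h i hi (by omega))).trans (h n hn (by omega))

lemma change_card (G : LGraph A) (v : ℕ → G.V) (k : ℕ)
    (hv : ∀ i < k, G.Reach (v i) (v (i + 1)))
    (S : Finset ℕ)
    (hmem : ∀ i ∈ S, i < k ∧ ¬ G.SameComp (v i) (v (i + 1))) :
    S.card + 1 ≤ G.numComponents := by
  classical
  haveI : Fintype {K : Set G.V // ∃ w : G.V, K = {u : G.V | G.SameComp w u}} :=
    Fintype.ofFinite _
  have hkS : k ∉ S := fun h => absurd (hmem k h).1 (lt_irrefl k)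
  let F : ℕ → {K : Set G.V // ∃ w : G.V, K = {u : G.V | G.SameComp w u}} :=
    fun i => ⟨{u | G.SameComp (v i) u}, ⟨v i, rfl⟩⟩
  have key : ∀ a b, a ∈ insert k S → b ∈ insert k S → a < b → F a ≠ F b := by
    intro a b ha hb hab hFab
    have ha' : a ∈ S := by
      rcases Finset.mem_insert.mp ha with h | h
      · exfalso
        rcases Finset.mem_insert.mp hb with h' | h'
        · omega
        · have : b < k := (hmem b h').1
          omega
      · exact h
    have hak : a < k := (hmem a ha').1
    have hbk : b ≤ k := by
      rcases Finset.mem_insert.mp hb with h' | h'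
      · omega
      · have := (hmem b h').1
        omega
    have hvals : {u | G.SameComp (v a) u} = {u | G.SameComp (v b) u} :=
      congrArg Subtype.val hFab
    have hsame : G.SameComp (v a) (v b) := by
      have hb' : v b ∈ {u | G.SameComp (v a) u} := by
        rw [hvals]; exact sameComp_refl G (v b)
      exact hb'
    have hreach : G.Reach (v (a + 1)) (v b) :=
      reach_chain G v (by omega) (fun i hi hi' => hv i (by omega))
    exact (hmem a ha').2 ⟨hv a hak, hreach.trans hsame.2⟩
  have hinj : Set.InjOn F (insert k S : Finset ℕ) := by
    intro a ha b hb hab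
    by_contra hne
    rcases Nat.lt_or_ge a b with h | h
    · exact key a b (by simpa using ha) (by simpa using hb) h hab
    · exact key b a (by simpa using hb) (by simpa using ha) (by omega) hab.symm
  have hcard := Finset.card_le_card_of_injOn F (fun _ _ => Finset.mem_univ _) hinj
  rw [Finset.card_insert_of_notMem hkS] at hcard
  calc S.card + 1 ≤ Finset.univ.card := hcard
    _ = G.numComponents := by
        rw [LGraph.numComponents, Nat.card_eq_fintype_card, Finset.card_univ]

end StmtAux

theorem stmt1 {A : Type} (G : LGraph A) [Nonempty G.V] (t k : ℕ) (ht : 0 < t)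
    (hk : (t + 1) * G.numComponents ^ 2 + G.numComponents ≤ k)
    (e f : ℕ → G.E)
    (he : ∀ i, i + 1 < k → G.t (e i) = G.s (e (i + 1)))
    (hf : ∀ i, i + 1 < k → G.t (f i) = G.s (f (i + 1))) :
    ∃ r : ℕ, r + t ≤ k ∧
      (∀ i < t, G.SameComp (G.s (e r)) (G.s (e (r + i))) ∧
                G.SameComp (G.s (e r)) (G.t (e (r + i)))) ∧
      (∀ i < t, G.SameComp (G.s (f r)) (G.s (f (r + i))) ∧
                G.SameComp (G.s (f r)) (G.t (f (r + i)))) := by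
  classical
  obtain ⟨v0⟩ := ‹Nonempty G.V›
  have hc1 : 1 ≤ G.numComponents := by
    haveI : Fintype {K : Set G.V // ∃ w : G.V, K = {u : G.V | G.SameComp w u}} :=
      Fintype.ofFinite _
    have : 0 < Nat.card {K : Set G.V // ∃ w : G.V, K = {u : G.V | G.SameComp w u}} := by
      rw [Nat.card_eq_fintype_card]
      exact Fintype.card_pos_iff.mpr ⟨⟨{u | G.SameComp v0 u}, ⟨v0, rfl⟩⟩⟩
    exact this
  have hk0 : 0 < k := by nlinarith
  set ve : ℕ → G.V := fun i => if i < k then G.s (e i) else G.t (e (k - 1)) with hvedef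
  set vf : ℕ → G.V := fun i => if i < k then G.s (f i) else G.t (f (k - 1)) with hvfdef
  have hve : ∀ i, i < k → G.s (e i) = ve i := by
    intro i hi; rw [hvedef]; simp [hi]
  have hvf : ∀ i, i < k → G.s (f i) = vf i := by
    intro i hi; rw [hvfdef]; simp [hi]
  have hte : ∀ i, i < k → G.t (e i) = ve (i + 1) := by
    intro i hi
    by_cases h : i + 1 < k
    · rw [hvedef]; simp only [if_pos h]; exact he i h
    · have hik : i = k - 1 := by omega
      rw [hvedef]; simp only [if_neg h]; rw [hik]
  have htf : ∀ i, i < k → G.t (f i) = vf (i + 1) := by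
    intro i hi
    by_cases h : i + 1 < k
    · rw [hvfdef]; simp only [if_pos h]; exact hf i h
    · have hik : i = k - 1 := by omega
      rw [hvfdef]; simp only [if_neg h]; rw [hik]
  have hre : ∀ i < k, G.Reach (ve i) (ve (i + 1)) := by
    intro i hi
    exact Relation.ReflTransGen.single ⟨e i, hve i hi, hte i hi⟩
  have hrf : ∀ i < k, G.Reach (vf i) (vf (i + 1)) := by
    intro i hi
    exact Relation.ReflTransGen.single ⟨f i, hvf i hi, htf i hi⟩
  set Se := (Finset.range k).filter fun i => ¬ G.SameComp (ve i) (ve (i + 1)) with hSe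
  set Sf := (Finset.range k).filter fun i => ¬ G.SameComp (vf i) (vf (i + 1)) with hSf
  have hcardE : Se.card + 1 ≤ G.numComponents := by
    refine StmtAux.change_card G ve k hre Se ?_
    intro i hi
    rw [hSe, Finset.mem_filter, Finset.mem_range] at hi
    exact hi
  have hcardF : Sf.card + 1 ≤ G.numComponents := by
    refine StmtAux.change_card G vf k hrf Sf ?_
    intro i hi
    rw [hSf, Finset.mem_filter, Finset.mem_range] at hi
    exact hi
  obtain ⟨c, hc⟩ : ∃ c, G.numComponents = c := ⟨_, rfl⟩
  rw [hc] at hk hcardE hcardF hc1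
  set Bad := Se ∪ Sf with hBad
  have hcardBad : Bad.card ≤ 2 * c - 2 := by
    have h := Finset.card_union_le Se Sf
    rw [← hBad] at h
    omega
  set m := 2 * c - 1 with hm
  have hmt : m * t ≤ k := by
    obtain ⟨c', rfl⟩ : ∃ c', c = c' + 1 := ⟨c - 1, by omega⟩
    have hm' : m = 2 * c' + 1 := by rw [hm]; omega
    rw [hm']
    nlinarith [sq_nonneg c', hk]
  have hblock : ∃ j < m, ∀ i, j * t ≤ i → i < j * t + t → i ∉ Bad := by
    by_contra hcon
    push_neg at hcon
    have hsurj : Set.SurjOn (fun i => i / t) (Bad : Set ℕ) ((Finset.range m : Finset ℕ) : Set ℕ) := by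
      intro j hj
      have hjm : j < m := by simpa using hj
      obtain ⟨i, h1, h2, h3⟩ := hcon j hjm
      refine ⟨i, h3, ?_⟩
      show i / t = j
      exact Nat.div_eq_of_lt_le h1 (by rw [Nat.succ_mul]; omega)
    have := Finset.card_le_card_of_surjOn (fun i => i / t) hsurj
    rw [Finset.card_range] at this
    omega
  obtain ⟨j, hjm, hjgood⟩ := hblock
  refine ⟨j * t, ?_, ?_, ?_⟩
  · have : (j + 1) * t ≤ m * t := Nat.mul_le_mul_right t (by omega)
    rw [Nat.succ_mul] at this
    omega
  all_goals {
    have hrt : j * t + t ≤ k := by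
      have : (j + 1) * t ≤ m * t := Nat.mul_le_mul_right t (by omega)
      rw [Nat.succ_mul] at this
      omega
    first
    | (have hstep : ∀ i, j * t ≤ i → i < j * t + t → G.SameComp (ve i) (ve (i + 1)) := by
        intro i hi1 hi2
        by_contra hns
        exact hjgood i hi1 hi2 (Finset.mem_union_left _ (Finset.mem_filter.mpr
          ⟨Finset.mem_range.mpr (by omega), hns⟩))
       have hchain : ∀ i, i ≤ t → G.SameComp (ve (j * t)) (ve (j * t + i)) := by
         intro i hi
         induction i with
         | zero => exact StmtAux.sameComp_refl G _
         | succ n ihn =>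
             exact StmtAux.sameComp_trans G (ihn (by omega))
               (hstep (j * t + n) (by omega) (by omega))
       intro i hi
       constructor
       · rw [hve (j * t) (by omega), hve (j * t + i) (by omega)]
         exact hchain i (by omega)
       · rw [hve (j * t) (by omega), hte (j * t + i) (by omega)]
         exact hchain (i + 1) (by omega))
    | (have hstep : ∀ i, j * t ≤ i → i < j * t + t → G.SameComp (vf i) (vf (i + 1)) := by
        intro i hi1 hi2
        by_contra hns
        exact hjgood i hi1 hi2 (Finset.mem_union_right _ (Finset.mem_filter.mpr
          ⟨Finset.mem_range.mpr (by omega), hns⟩))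
       have hchain : ∀ i, i ≤ t → G.SameComp (vf (j * t)) (vf (j * t + i)) := by
         intro i hi
         induction i with
         | zero => exact StmtAux.sameComp_refl G _
         | succ n ihn =>
             exact StmtAux.sameComp_trans G (ihn (by omega))
               (hstep (j * t + n) (by omega) (by omega))
       intro i hi
       constructor
       · rw [hvf (j * t) (by omega), hvf (j * t + i) (by omega)]
         exact hchain i (by omega)
       · rw [hvf (j * t) (by omega), htf (j * t + i) (by omega)]
         exact hchain (i + 1) (by omega))
  }
end

section
/- For every nonempty labelled graph G there exists a length l such that: for every word w in the language of G with |w| ≥ l, and every pair of presentations v₁e₁v₂…e_{|w|}v_{|w|+1} and v′₁e′₁v′₂…e′_{|w|}v′_{|w|+1} of w in G, there exists an index r such that v_r and v′_r lie in the same equivalence class of the relation ≈. -/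
section Aux

variable {A : Type} (G : LGraph A)

lemma walk_append {a b c : G.V} {es fs : List G.E} (h1 : G.Walk a b es)
    (h2 : G.Walk b c fs) : G.Walk a c (es ++ fs) := by
  induction h1 with
  | nil => simpa
  | cons e h ih => exact .cons e (ih h2)

lemma walk_reach {a b : G.V} {es : List G.E} (h : G.Walk a b es) : G.Reach a b := by
  induction h with
  | nil => exact .refl
  | cons e h ih => exact .head ⟨e, rfl, rfl⟩ ih

lemma walk_mem_reach {a b : G.V} {es : List G.E} (h : G.Walk a b es) :
    ∀ f ∈ es, G.Reach a (G.s f) ∧ G.Reach (G.t f) b := by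
  induction h with
  | nil => simp
  | cons e h ih =>
    intro f hf
    rcases List.mem_cons.mp hf with rfl | hf
    · exact ⟨.refl, walk_reach _ h⟩
    · obtain ⟨h1, h2⟩ := ih f hf
      exact ⟨.head ⟨e, rfl, rfl⟩ h1, h2⟩

lemma cycle_samecomp {p : G.V} {es : List G.E} (h : G.Walk p p es) :
    ∀ f ∈ es, G.SameComp p (G.s f) ∧ G.SameComp p (G.t f) := by
  intro f hf
  obtain ⟨h1, h2⟩ := walk_mem_reach G h f hf
  exact ⟨⟨h1, .head ⟨f, rfl, rfl⟩ h2⟩, ⟨h1.tail ⟨f, rfl, rfl⟩, h2⟩⟩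

lemma walk_pow {p : G.V} {es : List G.E} (h : G.Walk p p es) (k : ℕ) :
    G.Walk p p (List.replicate k es).flatten := by
  induction k with
  | zero => simpa using LGraph.Walk.nil p
  | succ k ih =>
    rw [List.replicate_succ, List.flatten_cons]
    exact walk_append G h ih

lemma cycle_followR {p : G.V} {es : List G.E} (h : G.Walk p p es) (k : ℕ) :
    (List.replicate k (es.map G.lab)).flatten ∈ G.FollowR p := by
  refine ⟨p, (List.replicate k es).flatten, walk_pow G h k, ?_, ?_⟩
  · rw [List.map_flatten, List.map_replicate]
  · intro f hf
    rw [List.mem_flatten] at hf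
    obtain ⟨l, hl, hfl⟩ := hf
    rw [List.mem_replicate] at hl
    exact cycle_samecomp G h f (hl.2 ▸ hfl)

lemma presFun_walk {n : ℕ} {w : ℕ → A} {v : ℕ → G.V} {e : ℕ → G.E}
    (h : G.PresFun n w v e) :
    ∀ d a, a + d ≤ n →
      G.Walk (v a) (v (a + d)) ((List.range d).map (fun k => e (a + k))) := by
  intro d
  induction d with
  | zero => intro a _; simpa using LGraph.Walk.nil (v a)
  | succ d ih =>
    intro a ha
    obtain ⟨hs, ht, -⟩ := h a (by omega)
    have hw := ih (a + 1) (by omega)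
    have hlist : (List.range (d + 1)).map (fun k => e (a + k)) =
        e a :: (List.range d).map (fun k => e (a + 1 + k)) := by
      rw [List.range_succ_eq_map, List.map_cons, List.map_map]
      refine congrArg₂ List.cons (by simp) ?_
      apply List.map_congr_left
      intro k _
      show e (a + (k + 1)) = e (a + 1 + k)
      congr 1
      omega
    rw [hlist]
    have hd : a + (d + 1) = a + 1 + d := by omega
    rw [hd, ← hs]
    refine LGraph.Walk.cons (e a) ?_
    rw [ht]
    exact hw

lemma presFun_labels {n : ℕ} {w : ℕ → A} {v : ℕ → G.V} {e : ℕ → G.E}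
    (h : G.PresFun n w v e) (d a : ℕ) (hdn : a + d ≤ n) :
    ((List.range d).map (fun k => e (a + k))).map G.lab =
      (List.range d).map (fun k => w (a + k)) := by
  rw [List.map_map]
  apply List.map_congr_left
  intro k hk
  rw [List.mem_range] at hk
  exact (h (a + k) (by omega)).2.2

end Aux

theorem stmt2 {A : Type} [Finite A] (G : LGraph A) [Nonempty G.V] :
    ∃ l : ℕ, ∀ n : ℕ, l ≤ n → ∀ (w : ℕ → A) (v v' : ℕ → G.V) (e e' : ℕ → G.E),
      G.PresFun n w v e → G.PresFun n w v' e' →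
        ∃ r ≤ n, G.Approx (v r) (v' r) := by
  refine ⟨Nat.card (G.V × G.V), ?_⟩
  intro n hn w v v' e e' hp hp'
  letI : Fintype G.V := Fintype.ofFinite _
  have hcard : Fintype.card (G.V × G.V) < Fintype.card (Fin (n + 1)) := by
    rw [Fintype.card_fin, ← Nat.card_eq_fintype_card]; omega
  obtain ⟨a, b, hab, hfab⟩ :=
    Fintype.exists_ne_map_eq_of_card_lt (fun i : Fin (n + 1) => (v i, v' i)) hcard
  -- arrange i < j with equal vertex pairs
  obtain ⟨i, j, hij, hjn, hvj, hv'j⟩ :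
      ∃ i j : ℕ, i < j ∧ j ≤ n ∧ v j = v i ∧ v' j = v' i := by
    rcases lt_or_gt_of_ne (fun h => hab (by exact_mod_cast Fin.ext h : a = b))
        with h | h
    · exact ⟨a, b, h, by omega, (congrArg Prod.fst hfab).symm,
        (congrArg Prod.snd hfab).symm⟩
    · exact ⟨b, a, h, by omega, congrArg Prod.fst hfab, congrArg Prod.snd hfab⟩
  set d := j - i with hd
  have hdn : i + d = j := by omega
  have hwalk : G.Walk (v i) (v i) ((List.range d).map (fun k => e (i + k))) := by
    have := presFun_walk G hp d i (by omega)
    rwa [hdn, hvj] at this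
  have hwalk' : G.Walk (v' i) (v' i) ((List.range d).map (fun k => e' (i + k))) := by
    have := presFun_walk G hp' d i (by omega)
    rwa [hdn, hv'j] at this
  set u : List A := (List.range d).map (fun k => w (i + k)) with hu
  have hlab : ((List.range d).map (fun k => e (i + k))).map G.lab = u :=
    presFun_labels G hp d i (by omega)
  have hlab' : ((List.range d).map (fun k => e' (i + k))).map G.lab = u :=
    presFun_labels G hp' d i (by omega)
  have hlink : G.Linked (v i) (v' i) := by
    refine Set.infinite_of_injective_forall_mem
      (f := fun k : ℕ => (List.replicate k u).flatten) ?_ ?_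
    · intro k1 k2 heq
      have h1 := congrArg List.length heq
      simp only [List.length_flatten, List.map_replicate, List.sum_replicate,
        smul_eq_mul] at h1
      have hul : u.length = d := by simp [hu]
      rw [hul] at h1
      have : 0 < d := by omega
      exact Nat.eq_of_mul_eq_mul_right this h1
    · intro k
      constructor
      · have := cycle_followR G hwalk k
        rwa [hlab] at this
      · have := cycle_followR G hwalk' k
        rwa [hlab'] at this
  exact ⟨i, by omega, Relation.ReflTransGen.single hlink⟩
end

section
/- Let G be a labelled graph and let u ≈ u′ be vertices of G. If w is a finite word having a presentation in G that ends at u, then there exists a word w′ with |w′| = |w| having a presentation ending at u′, and a chain in the language of G from w to w′. -/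
/-! If `u ∼ u'`, the infinite set `FollowR u ∩ FollowR u'` contains a word `y` with `|y| = |w|`.
Reading `y` from `u` extends the presentation of `w`, while reading it from `u'` ends in the
component of `u'`, so a return word `r` leads back to `u'`. In `w y r` every factor of length
at most `|w|` lies inside `w y` or inside `y r`, both in the language of `G`, so `w y r` is a
chain from `w` to the suffix `w'` of `y r` of length `|w|`, which is presented ending at `u'`.
Chains compose, which handles `≈`. -/

theorem List.IsInfix.infix_take_or_infix_drop {α : Type*} {f z : List α} (hf : f <:+: z)
    {n m : ℕ} (hlen : f.length ≤ m) : f <:+: z.take (n + m) ∨ f <:+: z.drop n := by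
  obtain ⟨s, t, rfl⟩ := hf
  by_cases hs : s.length ≤ n
  · left
    have hsf : (s ++ f).length ≤ n + m := by
      simp only [List.length_append]
      omega
    refine ⟨s, t.take (n + m - (s ++ f).length), ?_⟩
    rw [List.take_append, List.take_of_length_le hsf, List.append_assoc]
  · right
    refine ⟨s.drop n, t, ?_⟩
    rw [List.append_assoc s, List.drop_append_of_le_length (by omega), List.append_assoc]

section Chain

variable {A : Type} {L : Set (List A)}

theorem ChainWord.refl {w : List A} (hw : ∀ z, z <:+: w → z ∈ L) : ChainWord L w w 0 w :=
  ⟨rfl, by simp, by simp, by simp, fun z hz _ => hw z hz⟩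

theorem ChainWord.trans {w w₁ w₂ z₁ z₂ : List A} {n₁ n₂ : ℕ}
    (h₁ : ChainWord L w w₁ n₁ z₁) (h₂ : ChainWord L w₁ w₂ n₂ z₂) :
    ChainWord L w w₂ (n₁ + n₂) (z₁.take n₁ ++ z₂) := by
  obtain ⟨hlen₁, hzlen₁, htake₁, hdrop₁, hfac₁⟩ := h₁
  obtain ⟨hlen₂, hzlen₂, htake₂, hdrop₂, hfac₂⟩ := h₂
  have hprefix : (z₁.take n₁).length = n₁ := by
    rw [List.length_take]
    omega
  rw [← hlen₁] at htake₂
  have htake : (z₁.take n₁ ++ z₂).take (n₁ + w.length) = z₁ := by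
    rw [List.take_append, hprefix, Nat.add_sub_cancel_left, List.take_take,
      Nat.min_eq_right (by omega), htake₂, ← hdrop₁, List.take_append_drop]
  have hdrop : (z₁.take n₁ ++ z₂).drop n₁ = z₂ := by
    rw [List.drop_append, hprefix, List.drop_of_length_le hprefix.le, Nat.sub_self, List.drop_zero,
      List.nil_append]
  refine ⟨hlen₁.trans hlen₂, ?_, ?_, ?_, ?_⟩
  · rw [List.length_append, hprefix]
    omega
  · rw [← Nat.min_eq_left (Nat.le_add_left w.length n₁), ← List.take_take, htake, htake₁]
  · rw [← List.drop_drop, hdrop, hdrop₂]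
  · intro f hf hflen
    rcases hf.infix_take_or_infix_drop hflen with hf | hf
    · exact hfac₁ f (htake ▸ hf) hflen
    · exact hfac₂ f (hdrop ▸ hf) (by omega)

/-- The overlap `y` has length `|w|`, so no factor of length `≤ |w|` of `w y r` meets both
`w` and `r`. -/
theorem chainWord_of_overlap {w y r : List A} (hy : y.length = w.length)
    (hwy : ∀ z, z <:+: w ++ y → z ∈ L) (hyr : ∀ z, z <:+: y ++ r → z ∈ L) :
    ChainWord L w ((y ++ r).drop r.length) (w.length + r.length) (w ++ y ++ r) := by
  have htake : (w ++ y ++ r).take (w.length + w.length) = w ++ y := by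
    rw [show w.length + w.length = (w ++ y).length by simp [hy], List.take_left]
  have hdrop : (w ++ y ++ r).drop w.length = y ++ r := by
    rw [List.append_assoc, List.drop_left]
  refine ⟨by simp [hy], by simp [hy]; omega, ?_, ?_, ?_⟩
  · rw [List.append_assoc, List.take_left]
  · rw [← List.drop_drop, hdrop]
  · intro f hf hflen
    rcases hf.infix_take_or_infix_drop hflen with hf | hf
    · exact hwy f (htake ▸ hf)
    · exact hyr f (hdrop ▸ hf)

end Chain

namespace LGraph

variable {A : Type} {G : LGraph A}

theorem Walk.append {a b c : G.V} {es fs : List G.E} (h₁ : G.Walk a b es)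
    (h₂ : G.Walk b c fs) : G.Walk a c (es ++ fs) := by
  induction h₁ with
  | nil => exact h₂
  | cons e _ ih => exact .cons e (ih h₂)

theorem Walk.exists_take {a b : G.V} {es : List G.E} (h : G.Walk a b es) (n : ℕ) :
    ∃ c, G.Walk a c (es.take n) := by
  induction h generalizing n with
  | nil v => exact ⟨v, by simpa using Walk.nil v⟩
  | cons e _ ih =>
    cases n with
    | zero => exact ⟨_, .nil _⟩
    | succ n =>
      obtain ⟨c, hc⟩ := ih n
      exact ⟨c, .cons e hc⟩

theorem Walk.exists_drop {a b : G.V} {es : List G.E} (h : G.Walk a b es) (n : ℕ) :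
    ∃ c, G.Walk c b (es.drop n) := by
  induction h generalizing n with
  | nil v => exact ⟨v, by simpa using Walk.nil v⟩
  | cons e h ih =>
    cases n with
    | zero => exact ⟨_, .cons e h⟩
    | succ n => exact ih n

theorem Walk.eq_or_exists_target_eq {a b : G.V} {es : List G.E} (h : G.Walk a b es) :
    b = a ∨ ∃ e ∈ es, G.t e = b := by
  induction h with
  | nil => exact .inl rfl
  | cons e _ ih =>
    rcases ih with hb | ⟨e', he', hb⟩
    · exact .inr ⟨e, List.mem_cons_self, hb.symm⟩
    · exact .inr ⟨e', List.mem_cons_of_mem _ he', hb⟩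

theorem Reach.exists_walk {a b : G.V} (h : G.Reach a b) : ∃ es, G.Walk a b es := by
  induction h using Relation.ReflTransGen.head_induction_on with
  | refl => exact ⟨[], .nil b⟩
  | head hstep _ ih =>
    obtain ⟨e, rfl, rfl⟩ := hstep
    obtain ⟨es, hes⟩ := ih
    exact ⟨e :: es, .cons e hes⟩

theorem Walk.map_lab_mem_lang {a b : G.V} {es : List G.E} (h : G.Walk a b es) :
    es.map G.lab ∈ G.Lang :=
  ⟨a, b, es, h, rfl⟩

theorem mem_lang_of_infix {w z : List A} (hw : w ∈ G.Lang) (hz : z <:+: w) : z ∈ G.Lang := by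
  obtain ⟨a, b, es, hes, rfl⟩ := hw
  obtain ⟨s, t, hst⟩ := hz
  obtain ⟨c, hc⟩ := hes.exists_drop s.length
  obtain ⟨d, hd⟩ := hc.exists_take z.length
  refine ⟨c, d, _, hd, ?_⟩
  rw [List.map_take, List.map_drop, ← hst, List.append_assoc, List.drop_left, List.take_left]

theorem take_mem_followR {v : G.V} {w : List A} (hw : w ∈ G.FollowR v) (n : ℕ) :
    w.take n ∈ G.FollowR v := by
  obtain ⟨b, es, hes, rfl, hcomp⟩ := hw
  obtain ⟨c, hc⟩ := hes.exists_take n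
  exact ⟨c, es.take n, hc, List.map_take .., fun e he => hcomp e (List.take_subset n es he)⟩

theorem exists_walk_reach_of_mem_followR {v : G.V} {w : List A} (hw : w ∈ G.FollowR v) :
    ∃ (b : G.V) (es : List G.E), G.Walk v b es ∧ es.map G.lab = w ∧ G.Reach b v := by
  obtain ⟨b, es, hes, hmap, hcomp⟩ := hw
  refine ⟨b, es, hes, hmap, ?_⟩
  rcases hes.eq_or_exists_target_eq with rfl | ⟨e, he, rfl⟩
  · exact .refl
  · exact (hcomp e he).2.2

theorem Linked.exists_length_eq {u u' : G.V} (h : G.Linked u u') (m : ℕ) :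
    ∃ y ∈ G.FollowR u ∩ G.FollowR u', y.length = m := by
  obtain ⟨y, hy, hmy⟩ : ∃ y ∈ G.FollowR u ∩ G.FollowR u', m ≤ y.length := by
    by_contra! hshort
    refine h (((List.finite_length_lt G.E m).image (List.map G.lab)).subset ?_)
    rintro y hy
    obtain ⟨_, es, -, rfl, -⟩ := hy.1
    exact ⟨es, by simpa using hshort _ hy, rfl⟩
  exact ⟨y.take m, ⟨take_mem_followR hy.1 m, take_mem_followR hy.2 m⟩, by simp [hmy]⟩

def PresEndingAt (G : LGraph A) (u : G.V) (w : List A) : Prop :=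
  ∃ (v : G.V) (es : List G.E), G.Walk v u es ∧ es.map G.lab = w

theorem PresEndingAt.mem_lang {u : G.V} {w : List A} (hw : G.PresEndingAt u w) :
    w ∈ G.Lang := by
  obtain ⟨v, es, hes, rfl⟩ := hw
  exact hes.map_lab_mem_lang

theorem Linked.exists_chainWord {u u' : G.V} (h : G.Linked u u') {w : List A}
    (hw : G.PresEndingAt u w) :
    ∃ w', w'.length = w.length ∧ G.PresEndingAt u' w' ∧ ∃ n z, ChainWord G.Lang w w' n z := by
  obtain ⟨v, es, hes, hesw⟩ := hw
  obtain ⟨y, ⟨hyu, hyu'⟩, hylen⟩ := h.exists_length_eq w.length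
  obtain ⟨_, fs, hfs, hfsy, -⟩ := hyu
  obtain ⟨b, gs, hgs, hgsy, hb⟩ := exists_walk_reach_of_mem_followR hyu'
  obtain ⟨rs, hrs⟩ := hb.exists_walk
  have hloop := hgs.append hrs
  obtain ⟨c, hsuffix⟩ := hloop.exists_drop rs.length
  set r := rs.map G.lab
  have hwy : w ++ y ∈ G.Lang := by
    rw [← hesw, ← hfsy, ← List.map_append]
    exact (hes.append hfs).map_lab_mem_lang
  have hyr : y ++ r ∈ G.Lang := by
    rw [← hgsy, ← List.map_append]
    exact hloop.map_lab_mem_lang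
  refine ⟨(y ++ r).drop r.length, by simp [hylen], ⟨c, _, hsuffix, ?_⟩, _, _,
    chainWord_of_overlap hylen (fun _ => mem_lang_of_infix hwy)
      (fun _ => mem_lang_of_infix hyr)⟩
  rw [List.map_drop, List.map_append, hgsy, List.length_map]

theorem Approx.exists_chainWord {u u' : G.V} (h : G.Approx u u') {w : List A}
    (hw : G.PresEndingAt u w) :
    ∃ w', w'.length = w.length ∧ G.PresEndingAt u' w' ∧ ∃ n z, ChainWord G.Lang w w' n z := by
  induction h with
  | refl => exact ⟨w, rfl, hw, 0, w, .refl fun _ => mem_lang_of_infix hw.mem_lang⟩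
  | tail _ hlink ih =>
    obtain ⟨w₁, hlen₁, hw₁, n₁, z₁, hchain₁⟩ := ih
    obtain ⟨w₂, hlen₂, hw₂, n₂, z₂, hchain₂⟩ := hlink.exists_chainWord hw₁
    exact ⟨w₂, hlen₂.trans hlen₁, hw₂, _, _, hchain₁.trans hchain₂⟩

end LGraph

theorem stmt3 {A : Type} (G : LGraph A) (u u' : G.V) (h : G.Approx u u')
    (w : List A)
    (hw : ∃ (v0 : G.V) (es : List G.E), G.Walk v0 u es ∧ es.map G.lab = w) :
    ∃ w' : List A, w'.length = w.length ∧
      (∃ (v0' : G.V) (es' : List G.E), G.Walk v0' u' es' ∧ es'.map G.lab = w') ∧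
      ∃ (n : ℕ) (z : List A), ChainWord G.Lang w w' n z :=
  h.exists_chainWord hw
end

section
/- Let Σ ⊆ A^ℤ be a subshift with language L = L(Σ), and let x, y ∈ Σ. Then (x, y) is in the chain relation of (Σ, σ) if and only if for every l ∈ ℕ there exists a chain of nonzero length in L from x_{[−l,l]} to y_{[−l,l]}. -/
/-!
Two points are `2^{-l}`-close exactly when they agree on `[-l, l]`. In a `2^{-l}`-chain
`z₀, …, zₙ` the central window of `z_{i+1}` is therefore that of `z_i` moved by one letter, so
all these windows are read off a single word of length `n + 2l + 1`; every short factor of it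
lies inside one window, hence in `L`. Conversely, the windows of length `2l + 3` of a chain
word lie in `L`, so by shift-invariance each is the central window of a point of `Σ`;
consecutive points then agree on `[-l, l]` after one shift, which is a `2^{-l}`-chain.
-/

section ChainRelation

variable {A : Type}

lemma rho_lt_two_zpow_iff {x y : ℤ → A} {l : ℕ} :
    rho x y < 2 ^ (-(l : ℤ)) ↔ ∀ j : ℤ, j.natAbs ≤ l → x j = y j := by
  unfold rho
  split_ifs with hxy
  · simp [hxy]
  · obtain ⟨i, hi⟩ := Function.ne_iff.mp hxy
    rw [zpow_lt_zpow_iff_right₀ one_lt_two, neg_lt_neg_iff, Nat.cast_lt]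
    constructor
    · intro hl j hj
      by_contra hne
      have := Nat.sInf_le (s := {n : ℕ | ∃ i : ℤ, i.natAbs = n ∧ x i ≠ y i}) ⟨j, rfl, hne⟩
      omega
    · intro hagree
      obtain ⟨j, hj, hne⟩ := Nat.sInf_mem (⟨i.natAbs, i, rfl, hi⟩ :
        {n : ℕ | ∃ i : ℤ, i.natAbs = n ∧ x i ≠ y i}.Nonempty)
      by_contra hle
      exact hne (hagree j (by omega))

lemma translate_mem {Sig : Set (ℤ → A)} (hS : shift '' Sig = Sig) {q : ℤ → A}
    (hq : q ∈ Sig) (k : ℤ) : (fun m => q (m + k)) ∈ Sig := by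
  induction k using Int.induction_on with
  | zero => simpa using hq
  | succ k ih =>
    rw [← hS]
    exact ⟨_, ih, funext fun m => congrArg q (by ring)⟩
  | pred k ih =>
    rw [← hS] at ih
    obtain ⟨p, hp, hpq⟩ := ih
    convert hp using 1
    funext m
    calc q (m + (-k - 1)) = shift p (m - 1) := by rw [hpq]; ring_nf
      _ = p m := by simp [shift]

-- `central` elaborates with `List.range` coerced to `List ℤ` through the list monad.
lemma central_eq (x : ℤ → A) (l : ℕ) :
    central x l = (List.range (2 * l + 1)).map fun i : ℕ => x ((i : ℤ) - l) := by
  simp [central, List.map_eq_flatMap, List.flatMap_assoc]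

lemma central_length (x : ℤ → A) (l : ℕ) : (central x l).length = 2 * l + 1 := by
  simp [central_eq]

lemma getElem?_central (x : ℤ → A) {l j : ℕ} (hj : j ≤ 2 * l) :
    (central x l)[j]? = some (x ((j : ℤ) - l)) := by
  simp [central_eq, List.getElem?_range (by omega : j < 2 * l + 1)]

lemma exists_central_eq_of_mem_lang {Sig : Set (ℤ → A)} (hS : shift '' Sig = Sig)
    {u : List A} {l : ℕ} (hu : u ∈ lang Sig) (hlen : u.length = 2 * l + 1) :
    ∃ p ∈ Sig, central p l = u := by
  obtain ⟨q, hq, k, hk⟩ := hu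
  simp only [List.get_eq_getElem] at hk
  refine ⟨_, translate_mem hS hq (k + l), List.ext_getElem? fun j => ?_⟩
  rcases lt_or_ge j (2 * l + 1) with hj | hj
  · rw [getElem?_central _ (by omega), List.getElem?_eq_getElem (by omega),
      hk j (by omega)]
    exact congrArg (some ∘ q) (by ring)
  · rw [List.getElem?_eq_none (by rw [central_length]; omega),
      List.getElem?_eq_none (by omega)]

lemma getElem?_eq_of_central_eq {p : ℤ → A} {w : List A} {i l : ℕ}
    (h : central p l = (w.drop i).take (2 * l + 1)) {m : ℤ} (hm : m.natAbs ≤ l) :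
    w[(i + l + m).toNat]? = some (p m) := by
  have := congrArg (·[(l + m).toNat]?) h
  simp only [getElem?_central p (by omega : (l + m).toNat ≤ 2 * l), List.getElem?_take,
    List.getElem?_drop] at this
  have hcast : (((l : ℤ) + m).toNat : ℤ) - l = m := by omega
  have hindex : i + ((l : ℤ) + m).toNat = ((i : ℤ) + l + m).toNat := by omega
  rw [if_pos (by omega), hcast, hindex] at this
  exact this.symm

def IsWindowChain (z : ℕ → ℤ → A) (n l : ℕ) : Prop :=
  ∀ i < n, ∀ m : ℤ, m.natAbs ≤ l → z i (m + 1) = z (i + 1) m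

lemma isWindowChain_iff_rho_lt {z : ℕ → ℤ → A} {n l : ℕ} :
    IsWindowChain z n l ↔ ∀ i < n, rho (shift (z i)) (z (i + 1)) < 2 ^ (-(l : ℤ)) := by
  simp only [IsWindowChain, rho_lt_two_zpow_iff, shift]

def chainTrace (z : ℕ → ℤ → A) (n l : ℕ) : List A :=
  (List.range (n + (2 * l + 1))).map fun j => z (min j n) ((j : ℤ) - l - (min j n : ℕ))

namespace IsWindowChain

variable {z : ℕ → ℤ → A} {n l : ℕ}

lemma apply_add_eq (h : IsWindowChain z n l) {i k : ℕ} (hik : i + k ≤ n) {m : ℤ}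
    (hm : -(l : ℤ) ≤ m) (hmk : m + k ≤ l) : z i (m + k) = z (i + k) m := by
  induction k generalizing m with
  | zero => simp
  | succ k ih =>
    calc z i (m + (k + 1 : ℕ)) = z i ((m + 1) + k) := by push_cast; ring_nf
      _ = z (i + k) (m + 1) := ih (by omega) (by omega) (by push_cast at hmk; omega)
      _ = z (i + (k + 1)) m := h _ (by omega) m (by push_cast at hmk; omega)

lemma getElem?_chainTrace (h : IsWindowChain z n l) {i j : ℕ} (hi : i ≤ n) (hj : j ≤ 2 * l) :
    (chainTrace z n l)[i + j]? = some (z i ((j : ℤ) - l)) := by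
  obtain ⟨k, hk⟩ : ∃ k, min (i + j) n = i + k := ⟨min (i + j) n - i, by omega⟩
  have := h.apply_add_eq (i := i) (k := k) (m := j - l - k) (by omega) (by omega) (by omega)
  rw [sub_add_cancel] at this
  rw [chainTrace, List.getElem?_map, List.getElem?_range (by omega), Option.map_some, hk, this]
  congr 2
  push_cast
  ring

lemma chainWord_chainTrace (h : IsWindowChain z n l) {Sig : Set (ℤ → A)}
    (hz : ∀ i ≤ n, z i ∈ Sig) :
    ChainWord (lang Sig) (central (z 0) l) (central (z n) l) n (chainTrace z n l) := by
  have hlen : (chainTrace z n l).length = n + (2 * l + 1) := by simp [chainTrace]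
  refine ⟨by simp only [central_length], by rw [hlen, central_length], ?_, ?_, ?_⟩
  · rw [central_length]
    refine List.ext_getElem? fun j => ?_
    rcases lt_or_ge j (2 * l + 1) with hj | hj
    · rw [List.getElem?_take_of_lt hj, getElem?_central _ (by omega), ← zero_add j,
        h.getElem?_chainTrace (Nat.zero_le _) (by omega)]
      simp
    · rw [List.getElem?_eq_none (by simp; omega),
        List.getElem?_eq_none (by rw [central_length]; omega)]
  · refine List.ext_getElem? fun j => ?_
    rcases lt_or_ge j (2 * l + 1) with hj | hj
    · rw [List.getElem?_drop, getElem?_central _ (by omega),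
        h.getElem?_chainTrace le_rfl (by omega)]
    · rw [List.getElem?_eq_none (by simp; omega),
        List.getElem?_eq_none (by rw [central_length]; omega)]
  · intro u hu hul
    rw [central_length] at hul
    obtain ⟨s, hs, hus⟩ := List.infix_iff_getElem?.1 hu
    refine ⟨z (min s n), hz _ (min_le_right _ _), (s : ℤ) - l - (min s n : ℕ), fun j hj => ?_⟩
    have hj' := hus j hj
    rw [show j + s = min s n + (s - min s n + j) by omega,
      h.getElem?_chainTrace (min_le_right _ _) (by omega)] at hj'
    rw [List.get_eq_getElem, ← Option.some_inj.1 hj']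
    congr 1
    push_cast
    omega

end IsWindowChain

lemma exists_isWindowChain_of_chainWord {Sig : Set (ℤ → A)} (hS : shift '' Sig = Sig)
    {x y : ℤ → A} (hx : x ∈ Sig) (hy : y ∈ Sig) {n l : ℕ} (hn : 0 < n) {w : List A}
    (hw : ChainWord (lang Sig) (central x (l + 1)) (central y (l + 1)) n w) :
    ∃ z : ℕ → ℤ → A, z 0 = x ∧ z n = y ∧ (∀ i ≤ n, z i ∈ Sig) ∧ IsWindowChain z n l := by
  obtain ⟨-, hlen, htake, hdrop, hfac⟩ := hw
  rw [central_length] at hlen htake hfac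
  have hpoint : ∀ i, ∃ p : ℤ → A, i ≤ n → p ∈ Sig ∧ (i = 0 → p = x) ∧ (i = n → p = y) ∧
      central p (l + 1) = (w.drop i).take (2 * (l + 1) + 1) := by
    intro i
    by_cases hi0 : i = 0
    · subst hi0
      exact ⟨x, fun _ => ⟨hx, fun _ => rfl, by omega, by simpa using htake.symm⟩⟩
    by_cases hin : i = n
    · subst hin
      refine ⟨y, fun _ => ⟨hy, fun h => absurd h hi0, fun _ => rfl, ?_⟩⟩
      rw [hdrop, List.take_of_length_le (by rw [central_length])]
    by_cases hle : i ≤ n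
    · have hwindow : (w.drop i).take (2 * (l + 1) + 1) <:+: w :=
        (List.take_prefix _ _).isInfix.trans (List.drop_suffix _ _).isInfix
      obtain ⟨p, hp, hpw⟩ := exists_central_eq_of_mem_lang (l := l + 1) hS
        (hfac _ hwindow (by simp)) (by rw [List.length_take, List.length_drop]; omega)
      exact ⟨p, fun _ => ⟨hp, fun h => absurd h hi0, fun h => absurd h hin, hpw⟩⟩
    · exact ⟨x, fun h => absurd h hle⟩
  choose z hz using hpoint
  refine ⟨z, (hz 0 (Nat.zero_le _)).2.1 rfl, (hz n le_rfl).2.2.1 rfl, fun i hi => (hz i hi).1,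
    fun i hi m hm => Option.some_inj.1 ?_⟩
  have hcur := getElem?_eq_of_central_eq (hz i hi.le).2.2.2 (m := m + 1) (by omega)
  have hnext := getElem?_eq_of_central_eq (hz (i + 1) hi).2.2.2 (m := m) (by omega)
  rw [← hcur, ← hnext]
  congr 2
  push_cast
  ring

end ChainRelation

theorem stmt4 {A : Type} (Sig : Set (ℤ → A)) (hS : IsSubshift Sig)
    (x y : ℤ → A) (hx : x ∈ Sig) (hy : y ∈ Sig) :
    ChainRel Sig x y ↔
      ∀ l : ℕ, ∃ n : ℕ, 0 < n ∧
        ∃ w : List A, ChainWord (lang Sig) (central x l) (central y l) n w := by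
  constructor
  · intro hxy l
    obtain ⟨n, hn, z, rfl, rfl, hz, hstep⟩ := hxy _ (by positivity : (0 : ℝ) < 2 ^ (-(l : ℤ)))
    exact ⟨n, hn, _, (isWindowChain_iff_rho_lt.2 hstep).chainWord_chainTrace hz⟩
  · intro hwords ε hε
    obtain ⟨l, hl⟩ : ∃ l : ℕ, (2 : ℝ) ^ (-(l : ℤ)) < ε := by
      obtain ⟨l, hl⟩ := exists_pow_lt_of_lt_one hε (by norm_num : (2 : ℝ)⁻¹ < 1)
      exact ⟨l, by rwa [zpow_neg, zpow_natCast, ← inv_pow]⟩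
    obtain ⟨n, hn, w, hw⟩ := hwords (l + 1)
    obtain ⟨z, hz0, hzn, hz, hchain⟩ := exists_isWindowChain_of_chainWord hS.2 hx hy hn hw
    exact ⟨n, hn, z, hz0, hzn, hz, fun i hi => (isWindowChain_iff_rho_lt.1 hchain i hi).trans hl⟩
end

section
/- Let G be a nonempty labelled graph, H a subgraph of the linking graph G/≈, K = π⁻¹(H) the preimage subgraph of G, and L the subgraph of G induced by the vertices not in K. Then there exists m such that no word of length at least m has both a presentation in K and a presentation in L. -/
namespace LGraph

variable {A : Type} {G : LGraph A}

/-- Vertex at position `i` along a walk with edge list `es` ending at `v`. -/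
def wvtx (G : LGraph A) (v : G.V) (es : List G.E) (i : ℕ) : G.V :=
  if h : i < es.length then G.s (es[i]'h) else v

lemma wvtx_lt (v : G.V) {es : List G.E} {i : ℕ} (h : i < es.length) :
    wvtx G v es i = G.s (es[i]'h) := dif_pos h

lemma wvtx_ge (v : G.V) {es : List G.E} {i : ℕ} (h : ¬ i < es.length) :
    wvtx G v es i = v := dif_neg h

lemma wvtx_cons (v : G.V) (e : G.E) (es : List G.E) (i : ℕ) :
    wvtx G v (e :: es) (i + 1) = wvtx G v es i := by
  unfold wvtx
  by_cases h : i < es.length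
  · rw [dif_pos h, dif_pos (show i + 1 < (e :: es).length by simp; omega)]
    simp
  · rw [dif_neg h, dif_neg (show ¬ i + 1 < (e :: es).length by simp; omega)]

lemma walk_vtx_zero {u v : G.V} {es : List G.E} (h : G.Walk u v es) :
    wvtx G v es 0 = u := by
  cases h with
  | nil => exact wvtx_ge _ (by simp)
  | cons e h => exact wvtx_lt _ (by simp)

lemma walk_drop {u v : G.V} {es : List G.E} (h : G.Walk u v es) (a : ℕ) :
    G.Walk (wvtx G v es a) v (es.drop a) := by
  induction h generalizing a with
  | nil v =>
    rw [List.drop_nil, wvtx_ge _ (by simp)]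
    exact Walk.nil v
  | cons e h ih =>
    cases a with
    | zero =>
      rw [wvtx_lt _ (by simp)]
      exact Walk.cons e h
    | succ a =>
      rw [wvtx_cons, List.drop_succ_cons]
      exact ih a

lemma walk_take {u v : G.V} {es : List G.E} (h : G.Walk u v es) (b : ℕ) :
    G.Walk u (wvtx G v es b) (es.take b) := by
  induction h generalizing b with
  | nil v =>
    rw [List.take_nil, wvtx_ge _ (by simp)]
    exact Walk.nil v
  | cons e h ih =>
    cases b with
    | zero =>
      rw [wvtx_lt _ (by simp), List.take_zero]
      exact Walk.nil _
    | succ b =>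
      rw [wvtx_cons, List.take_succ_cons]
      exact Walk.cons e (ih b)

lemma walk_t {u v : G.V} {es : List G.E} (h : G.Walk u v es) (i : ℕ)
    (hi : i < es.length) : G.t (es[i]'hi) = wvtx G v es (i + 1) := by
  induction h generalizing i with
  | nil => simp at hi
  | cons e h ih =>
    cases i with
    | zero =>
      rw [wvtx_cons]
      simpa using (walk_vtx_zero h).symm
    | succ i =>
      rw [wvtx_cons]
      simpa using ih i (by simpa using hi)

lemma wvtx_drop (v : G.V) (es : List G.E) (a L : ℕ) :
    wvtx G v (es.drop a) L = wvtx G v es (a + L) := by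
  unfold wvtx
  by_cases h : a + L < es.length
  · rw [dif_pos h, dif_pos (show L < (es.drop a).length by simp; omega)]
    simp [List.getElem_drop]
  · rw [dif_neg h, dif_neg (show ¬ L < (es.drop a).length by simp; omega)]

lemma walk_reach {u v : G.V} {es : List G.E} (h : G.Walk u v es) : G.Reach u v := by
  induction h with
  | nil => exact Relation.ReflTransGen.refl
  | cons e h ih => exact Relation.ReflTransGen.head ⟨e, rfl, rfl⟩ ih

lemma sameComp_trans {a b c : G.V} (h1 : G.SameComp a b) (h2 : G.SameComp b c) :
    G.SameComp a c := ⟨h1.1.trans h2.1, h2.2.trans h1.2⟩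

lemma breakpoints_inj {u v : G.V} {es : List G.E} (h : G.Walk u v es) :
    Set.InjOn (wvtx G v es)
      {i | i < es.length ∧ ¬ G.SameComp (wvtx G v es i) (wvtx G v es (i + 1))} := by
  have haux : ∀ i j, i ∈ {i | i < es.length ∧
      ¬ G.SameComp (wvtx G v es i) (wvtx G v es (i + 1))} →
      j ∈ {i | i < es.length ∧ ¬ G.SameComp (wvtx G v es i) (wvtx G v es (i + 1))} →
      i < j → wvtx G v es i = wvtx G v es j → False := by
    intro i j hi hj hlt hij
    apply hi.2
    refine ⟨Relation.ReflTransGen.single ⟨es[i]'hi.1, (wvtx_lt _ hi.1).symm, walk_t h i hi.1⟩, ?_⟩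
    have hr : G.Reach (wvtx G v es (i + 1)) (wvtx G v es j) := by
      have hw := walk_take (walk_drop h (i + 1)) (j - (i + 1))
      rw [wvtx_drop, show (i + 1) + (j - (i + 1)) = j by omega] at hw
      exact walk_reach hw
    rwa [← hij] at hr
  intro i hi j hj hij
  rcases lt_trichotomy i j with hlt | heq | hlt
  · exact absurd (haux i j hi hj hlt hij) not_false
  · exact heq
  · exact absurd (haux j i hj hi hlt hij.symm) not_false

lemma followR_of_segment {u v : G.V} {es : List G.E} (h : G.Walk u v es)
    (a L' : ℕ) (ha : a + L' ≤ es.length)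
    (hfree : ∀ d, d ≤ L' → G.SameComp (wvtx G v es a) (wvtx G v es (a + d))) :
    ((es.map G.lab).drop a).take L' ∈ G.FollowR (wvtx G v es a) := by
  refine ⟨wvtx G v es (a + L'), (es.drop a).take L', ?_, ?_, ?_⟩
  · have hw := walk_take (walk_drop h a) L'
    rwa [wvtx_drop] at hw
  · rw [List.map_take, List.map_drop]
  · intro e he
    rw [List.mem_iff_getElem] at he
    obtain ⟨i, hi, rfl⟩ := he
    have hi' : i < L' := by
      have := hi; simp [List.length_take, List.length_drop] at this; omega
    have hail : a + i < es.length := by omega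
    have hgete : ((es.drop a).take L')[i]'hi = es[a + i]'hail := by
      simp [List.getElem_take, List.getElem_drop]
    constructor
    · have hc := hfree i (le_of_lt hi')
      rwa [wvtx_lt v hail, ← hgete] at hc
    · have hc := hfree (i + 1) hi'
      rw [show a + (i + 1) = (a + i) + 1 by omega, ← walk_t h (a + i) hail] at hc
      rwa [← hgete] at hc

lemma key_lemma (G : LGraph A) (S : Set G.V)
    (hass : ∀ m : ℕ, ∃ w : List A, m ≤ w.length ∧ G.PresIn S w ∧ G.PresIn Sᶜ w)
    (L : ℕ) :
    ∃ u v : G.V, u ∈ S ∧ v ∈ Sᶜ ∧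
      ∃ z, z ∈ G.FollowR u ∩ G.FollowR v ∧ z.length = L + 1 := by
  classical
  have : Fintype G.V := Fintype.ofFinite G.V
  set N := Fintype.card G.V with hN
  set L' := L + 1 with hL'
  set k := 2 * N + 1 with hk
  obtain ⟨w, hwlen, ⟨u1, v1, es1, hwalk1, hlab1, hu1, hv1, hed1⟩,
    ⟨u2, v2, es2, hwalk2, hlab2, hu2, hv2, hed2⟩⟩ := hass (k * L')
  set n := w.length with hn
  have hlen1 : es1.length = n := by rw [hn, ← hlab1, List.length_map]
  have hlen2 : es2.length = n := by rw [hn, ← hlab2, List.length_map]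
  set f1 : ℕ → G.V := wvtx G v1 es1 with hf1
  set f2 : ℕ → G.V := wvtx G v2 es2 with hf2
  set B1 : Finset ℕ :=
    (Finset.range n).filter (fun i => ¬ G.SameComp (f1 i) (f1 (i + 1))) with hB1
  set B2 : Finset ℕ :=
    (Finset.range n).filter (fun i => ¬ G.SameComp (f2 i) (f2 (i + 1))) with hB2
  have hB1card : B1.card ≤ N := by
    have hinj : Set.InjOn f1 ↑B1 := by
      intro i hi j hj hij
      refine breakpoints_inj hwalk1 ?_ ?_ hij <;>
        · simp only [hB1, Finset.coe_filter, Finset.mem_range, Set.mem_setOf_eq] at hi hj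
          first
          | exact ⟨by omega, hi.2⟩
          | exact ⟨by omega, hj.2⟩
    calc B1.card = (B1.image f1).card := (Finset.card_image_of_injOn hinj).symm
      _ ≤ Finset.univ.card := Finset.card_le_univ _
      _ = N := Finset.card_univ
  have hB2card : B2.card ≤ N := by
    have hinj : Set.InjOn f2 ↑B2 := by
      intro i hi j hj hij
      refine breakpoints_inj hwalk2 ?_ ?_ hij <;>
        · simp only [hB2, Finset.coe_filter, Finset.mem_range, Set.mem_setOf_eq] at hi hj
          first
          | exact ⟨by omega, hi.2⟩
          | exact ⟨by omega, hj.2⟩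
    calc B2.card = (B2.image f2).card := (Finset.card_image_of_injOn hinj).symm
      _ ≤ Finset.univ.card := Finset.card_le_univ _
      _ = N := Finset.card_univ
  have hBcard : (B1 ∪ B2).card ≤ 2 * N := by
    have := Finset.card_union_le B1 B2
    omega
  -- find a block free of breakpoints
  have hblock : ∃ j, j < k ∧ ∀ i, j * L' ≤ i → i < j * L' + L' →
      G.SameComp (f1 i) (f1 (i + 1)) ∧ G.SameComp (f2 i) (f2 (i + 1)) := by
    by_contra hcon
    push_neg at hcon
    choose g hg1 hg2 hg3 using hcon
    set g' : ℕ → ℕ := fun j => if h : j < k then g j h else 0 with hg'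
    have hmem : ∀ j ∈ Finset.range k, g' j ∈ B1 ∪ B2 := by
      intro j hj
      rw [Finset.mem_range] at hj
      have hgj : g' j = g j hj := dif_pos hj
      have hlt : g j hj < n := by
        have h1 := hg2 j hj
        have h2 : j * L' + L' ≤ k * L' := by
          have : (j + 1) * L' ≤ k * L' := Nat.mul_le_mul_right L' (by omega)
          rwa [Nat.succ_mul] at this
        omega
      rw [hgj, Finset.mem_union]
      rcases Classical.em (G.SameComp (f1 (g j hj)) (f1 (g j hj + 1))) with hc | hc
      · exact Or.inr (Finset.mem_filter.mpr ⟨Finset.mem_range.mpr hlt, hg3 j hj hc⟩)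
      · exact Or.inl (Finset.mem_filter.mpr ⟨Finset.mem_range.mpr hlt, hc⟩)
    have hinj : Set.InjOn g' ↑(Finset.range k) := by
      intro i hi j hj hij
      simp only [Finset.coe_range, Set.mem_Iio] at hi hj
      have h1 : g' i = g i hi := dif_pos hi
      have h2 : g' j = g j hj := dif_pos hj
      have hdi : g' i / L' = i := by
        rw [h1]
        exact Nat.div_eq_of_lt_le (hg1 i hi) (by rw [Nat.succ_mul]; exact hg2 i hi)
      have hdj : g' j / L' = j := by
        rw [h2]
        exact Nat.div_eq_of_lt_le (hg1 j hj) (by rw [Nat.succ_mul]; exact hg2 j hj)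
      rw [← hdi, ← hdj, hij]
    have := Finset.card_le_card_of_injOn g' hmem hinj
    rw [Finset.card_range] at this
    have := Finset.card_union_le B1 B2
    omega
  obtain ⟨j, hjk, hfree⟩ := hblock
  set a := j * L' with haeq
  have haL : a + L' ≤ n := by
    have : (j + 1) * L' ≤ k * L' := Nat.mul_le_mul_right L' (by omega)
    rw [Nat.succ_mul] at this
    omega
  have han : a < n := by omega
  have hchain1 : ∀ d, d ≤ L' → G.SameComp (f1 a) (f1 (a + d)) := by
    intro d hd
    induction d with
    | zero => exact ⟨Relation.ReflTransGen.refl, Relation.ReflTransGen.refl⟩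
    | succ d ih =>
      refine sameComp_trans (ih (by omega)) ?_
      have := (hfree (a + d) (by omega) (by omega)).1
      rwa [show a + d + 1 = a + (d + 1) by omega] at this
  have hchain2 : ∀ d, d ≤ L' → G.SameComp (f2 a) (f2 (a + d)) := by
    intro d hd
    induction d with
    | zero => exact ⟨Relation.ReflTransGen.refl, Relation.ReflTransGen.refl⟩
    | succ d ih =>
      refine sameComp_trans (ih (by omega)) ?_
      have := (hfree (a + d) (by omega) (by omega)).2
      rwa [show a + d + 1 = a + (d + 1) by omega] at this
  refine ⟨f1 a, f2 a, ?_, ?_, (w.drop a).take L', ⟨?_, ?_⟩, ?_⟩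
  · rw [hf1, wvtx_lt _ (show a < es1.length by omega)]
    exact (hed1 _ (List.getElem_mem _)).1
  · rw [hf2, wvtx_lt _ (show a < es2.length by omega)]
    exact (hed2 _ (List.getElem_mem _)).1
  · have := followR_of_segment hwalk1 a L' (by omega) hchain1
    rwa [hlab1] at this
  · have := followR_of_segment hwalk2 a L' (by omega) hchain2
    rwa [hlab2] at this
  · simp [List.length_take, List.length_drop]
    omega

end LGraph

theorem stmt7 {A : Type} [Finite A] (G : LGraph A) [Nonempty G.V]
    (S : Set G.V) (hsat : G.SaturatedSet S) :
    ∃ m : ℕ, ∀ w : List A, m ≤ w.length → ¬(G.PresIn S w ∧ G.PresIn Sᶜ w) := by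
  classical
  by_contra hcon
  push_neg at hcon
  have hass : ∀ m : ℕ, ∃ w : List A, m ≤ w.length ∧ G.PresIn S w ∧ G.PresIn Sᶜ w := by
    intro m
    obtain ⟨w, h1, h2⟩ := hcon m
    exact ⟨w, h1, h2⟩
  have key := fun L => LGraph.key_lemma G S hass L
  choose u v hu hv z hz hzlen using key
  obtain ⟨⟨u0, v0⟩, hfib⟩ := Finite.exists_infinite_fiber (fun L => (u L, v L))
  have hL : ∀ L : ℕ, L ∈ (fun L => (u L, v L)) ⁻¹' {(u0, v0)} → u L = u0 ∧ v L = v0 := by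
    intro L hLmem
    simp only [Set.mem_preimage, Set.mem_singleton_iff, Prod.mk.injEq] at hLmem
    exact hLmem
  have hLinked : G.Linked u0 v0 := by
    have hg : ∀ p : (fun L => (u L, v L)) ⁻¹' {(u0, v0)},
        z ↑p ∈ (G.FollowR u0 ∩ G.FollowR v0 : Set (List A)) := by
      rintro ⟨L, hm⟩
      obtain ⟨h1, h2⟩ := hL L hm
      have hzp := hz L
      rw [h1, h2] at hzp
      exact hzp
    have hginj : Function.Injective
        (fun p : (fun L => (u L, v L)) ⁻¹' {(u0, v0)} =>
          (⟨z ↑p, hg p⟩ : (G.FollowR u0 ∩ G.FollowR v0 : Set (List A)))) := by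
      rintro ⟨L1, h1⟩ ⟨L2, h2⟩ hgeq
      have hzz : z L1 = z L2 := congrArg Subtype.val hgeq
      have hlen : (z L1).length = L1 + 1 := hzlen L1
      rw [hzz, hzlen L2] at hlen
      exact Subtype.ext (show L1 = L2 by omega)
    exact Set.infinite_coe_iff.mp (Infinite.of_injective _ hginj)
  have hApprox : G.Approx u0 v0 := Relation.ReflTransGen.single hLinked
  obtain ⟨⟨L0, hL0mem⟩⟩ := @Infinite.nonempty _ hfib
  have hu0 : u0 ∈ S := (hL L0 hL0mem).1 ▸ hu L0
  have hv0 : v0 ∈ Sᶜ := (hL L0 hL0mem).2 ▸ hv L0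
  exact hv0 ((hsat u0 v0 hApprox).mp hu0)
end

section
/- Let G be a labelled graph, H a terminal subgraph of the linking graph G/≈, K = π⁻¹(H), and let m be such that no word of length ≥ m has presentations both in K and in the subgraph induced by the complement of K. If u is a word of length l ≥ 2m + 1 with a presentation in K and there is a chain in L(G) from u to a word v, then v_{[m+1,l]} has a presentation in K. -/
/-! Since no edge leaves `K` (the vertex set `S`), along a walk of `G` the vertices outside `K`
all come before the vertices in `K`. Cutting a presentation of a word of `L(G)` after its first `m` letters therefore
presents either the rest of the word in `K` or these `m` letters in the complement of `K`; by the
choice of `m`, the first alternative holds as soon as the first `m` letters are presented in `K`.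
Slide a window of length `l` along the chain: the first `m` letters of each window lie in the part
after the first `m` letters of an earlier window (or in `u`), and `l ≥ 2m + 1` is exactly what makes
this possible, so by induction every window, the last of which is `v`, is presented in `K` after
its first `m` letters. -/

theorem List.take_drop_isInfix_take_drop {α : Type*} (l : List α) {i j i' j' : ℕ}
    (hi : i' ≤ i) (hj : i + j ≤ i' + j') :
    (l.drop i).take j <:+: (l.drop i').take j' := by
  have h : (l.drop i).take j = (((l.drop i').take j').drop (i - i')).take j := by
    rw [List.drop_take, List.drop_drop, List.take_take, Nat.add_sub_cancel' hi,
      min_eq_left (by omega)]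
  rw [h]
  exact (List.take_prefix _ _).isInfix.trans (List.drop_suffix _ _).isInfix

namespace LGraph

variable {A : Type} {G : LGraph A} {T S : Set G.V} {a b : G.V} {es : List G.E}

theorem Walk.exists_take_drop (h : G.Walk a b es) (k : ℕ) :
    ∃ c, G.Walk a c (es.take k) ∧ G.Walk c b (es.drop k) := by
  induction h generalizing k with
  | nil v => exact ⟨v, by simpa using Walk.nil v, by simpa using Walk.nil v⟩
  | cons e h ih =>
    cases k with
    | zero => exact ⟨G.s e, Walk.nil _, Walk.cons e h⟩
    | succ k =>
      obtain ⟨c, h₁, h₂⟩ := ih k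
      exact ⟨c, Walk.cons e h₁, h₂⟩

theorem Walk.mem_of_start_mem (h : G.Walk a b es) (hT : ∀ e ∈ es, G.s e ∈ T → G.t e ∈ T)
    (ha : a ∈ T) : b ∈ T ∧ ∀ e ∈ es, G.s e ∈ T ∧ G.t e ∈ T := by
  induction h with
  | nil v => exact ⟨ha, by simp⟩
  | cons e h ih =>
    have hte := hT e List.mem_cons_self ha
    obtain ⟨hb, hall⟩ := ih (fun e' he' => hT e' (List.mem_cons_of_mem _ he')) hte
    exact ⟨hb, List.forall_mem_cons.2 ⟨⟨ha, hte⟩, hall⟩⟩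

theorem Walk.mem_of_end_mem (h : G.Walk a b es) (hT : ∀ e ∈ es, G.t e ∈ T → G.s e ∈ T)
    (hb : b ∈ T) : a ∈ T ∧ ∀ e ∈ es, G.s e ∈ T ∧ G.t e ∈ T := by
  induction h with
  | nil v => exact ⟨hb, by simp⟩
  | cons e h ih =>
    obtain ⟨hte, hall⟩ := ih (fun e' he' => hT e' (List.mem_cons_of_mem _ he')) hb
    have hse := hT e List.mem_cons_self hte
    exact ⟨hse, List.forall_mem_cons.2 ⟨⟨hse, hte⟩, hall⟩⟩

theorem PresIn.take {w : List A} (hw : G.PresIn T w) (k : ℕ) : G.PresIn T (w.take k) := by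
  obtain ⟨a, b, es, h, rfl, ha, -, hall⟩ := hw
  obtain ⟨c, h₁, -⟩ := h.exists_take_drop k
  have hall₁ : ∀ e ∈ es.take k, G.s e ∈ T ∧ G.t e ∈ T :=
    fun e he => hall e (List.mem_of_mem_take he)
  have hc := (h₁.mem_of_start_mem (fun e he _ => (hall₁ e he).2) ha).1
  exact ⟨a, c, _, h₁, List.map_take .., ha, hc, hall₁⟩

theorem PresIn.drop {w : List A} (hw : G.PresIn T w) (k : ℕ) : G.PresIn T (w.drop k) := by
  obtain ⟨a, b, es, h, rfl, ha, hb, hall⟩ := hw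
  obtain ⟨c, h₁, h₂⟩ := h.exists_take_drop k
  have hc := (h₁.mem_of_start_mem
    (fun e he _ => (hall e (List.mem_of_mem_take he)).2) ha).1
  exact ⟨c, b, _, h₂, List.map_drop .., hc, hb, fun e he => hall e (List.mem_of_mem_drop he)⟩

theorem PresIn.of_isInfix {w w' : List A} (hw : G.PresIn T w) (h : w' <:+: w) :
    G.PresIn T w' := by
  obtain ⟨s, t, rfl⟩ := h
  simpa using (hw.drop s.length).take w'.length

theorem presIn_drop_or_presIn_compl_take (hS : G.ForwardClosed S) {w : List A}
    (hw : w ∈ G.Lang) (k : ℕ) : G.PresIn S (w.drop k) ∨ G.PresIn Sᶜ (w.take k) := by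
  obtain ⟨a, b, es, h, rfl⟩ := hw
  obtain ⟨c, h₁, h₂⟩ := h.exists_take_drop k
  by_cases hc : c ∈ S
  · obtain ⟨hb, hall⟩ := h₂.mem_of_start_mem (fun e _ => hS e) hc
    exact Or.inl ⟨c, b, _, h₂, List.map_drop .., hc, hb, hall⟩
  · obtain ⟨ha, hall⟩ := h₁.mem_of_end_mem (T := Sᶜ) (fun e _ => mt (hS e)) hc
    exact Or.inr ⟨a, c, _, h₁, List.map_take .., ha, hc, hall⟩

section Chain

variable {m : ℕ} (hS : G.ForwardClosed S)
  (hm : ∀ w : List A, m ≤ w.length → ¬(G.PresIn S w ∧ G.PresIn Sᶜ w))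
include hS hm

theorem presIn_drop_of_presIn_take {w : List A} (hw : w ∈ G.Lang) (hlen : m ≤ w.length)
    (h : G.PresIn S (w.take m)) : G.PresIn S (w.drop m) :=
  (presIn_drop_or_presIn_compl_take hS hw m).resolve_right
    fun hc => hm _ (by simpa using hlen) ⟨h, hc⟩

theorem presIn_window_drop_of_chainWord {u v z : List A} {n : ℕ} (hu : G.PresIn S u)
    (hlen : 2 * m + 1 ≤ u.length) (hchain : ChainWord G.Lang u v n z) :
    ∀ i ≤ n, G.PresIn S ((z.drop (i + m)).take (u.length - m)) := by
  obtain ⟨-, hzlen, hzu, -, hfac⟩ := hchain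
  intro i
  induction i using Nat.strong_induction_on with
  | _ i ih =>
  intro hi
  have hwindow : (z.drop i).take u.length ∈ G.Lang :=
    hfac _ ((List.take_prefix _ _).isInfix.trans (List.drop_suffix _ _).isInfix)
      (List.length_take_le _ _)
  have hprefix : G.PresIn S (((z.drop i).take u.length).take m) := by
    rw [List.take_take, min_eq_left (by omega)]
    rcases le_or_gt i (m + 1) with hi' | hi'
    · refine hu.of_isInfix ?_
      simpa [hzu] using z.take_drop_isInfix_take_drop (i' := 0) (j' := u.length)
        (Nat.zero_le i) (by omega : i + m ≤ 0 + u.length)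
    · -- the earlier window starting at `i - m - 1` is presented in `S` from position `i - 1` on
      exact (ih (i - m - 1) (by omega) (by omega)).of_isInfix
        (z.take_drop_isInfix_take_drop (by omega) (by omega))
  have h := presIn_drop_of_presIn_take hS hm hwindow (by simp; omega) hprefix
  rwa [List.drop_take, List.drop_drop] at h

end Chain

end LGraph

theorem stmt8_general {A : Type} (G : LGraph A) (S : Set G.V)
    (hterm : G.ForwardClosed S)
    (m : ℕ) (hm : ∀ w : List A, m ≤ w.length → ¬(G.PresIn S w ∧ G.PresIn Sᶜ w))
    (u v z : List A) (l n : ℕ) (hl : u.length = l) (h2m : 2 * m + 1 ≤ l)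
    (hu : G.PresIn S u) (hchain : ChainWord G.Lang u v n z) :
    G.PresIn S (v.drop m) := by
  subst hl
  have hlast := LGraph.presIn_window_drop_of_chainWord hterm hm hu h2m hchain n le_rfl
  obtain ⟨-, hzlen, -, hzv, -⟩ := hchain
  have hv : (z.drop (n + m)).take (u.length - m) = v.drop m := by
    rw [← hzv, List.drop_drop]
    exact List.take_of_length_le (by simp; omega)
  rwa [hv] at hlast

theorem stmt8 {A : Type} (G : LGraph A) (S : Set G.V)
    (hsat : G.SaturatedSet S) (hterm : G.ForwardClosed S)
    (m : ℕ) (hm : ∀ w : List A, m ≤ w.length → ¬(G.PresIn S w ∧ G.PresIn Sᶜ w))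
    (u v z : List A) (l n : ℕ) (hl : u.length = l) (h2m : 2 * m + 1 ≤ l)
    (hu : G.PresIn S u) (hchain : ChainWord G.Lang u v n z) :
    G.PresIn S (v.drop m) :=
  stmt8_general G S hterm m hm u v z l n hl h2m hu hchain
end
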